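/- Under the hypotheses of the approximate alignment lemma — X, Y ∈ ℝ^{nd×d} with invertible d×d blocks, X̃ = sgn(X), Ỹ = sgn(Y) blockwise, X, Y, X̃, Ỹ ∈ N_{2ε}, ‖X − X̃‖_F ≤ e_F ≤ √n, ‖Y − Ỹ‖_F ≤ e_F, ε ≤ 1/(4√2) — the optimal alignment rotations Q = sgn(YᵀX) and Q̃ = sgn(ỸᵀX̃) satisfy n·‖Q̃ − Q‖_F ≤ 9√n · e_F. -/

import Mathlib

open Matrix MeasureTheory ProbabilityTheory

noncomputable section

/-- Frobenius norm of a real matrix. -/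
def frob {m k : Type*} [Fintype m] [Fintype k] (A : Matrix m k ℝ) : ℝ :=
  Real.sqrt (∑ i, ∑ j, (A i j) ^ 2)

/-- Spectral (operator) norm of a real matrix: the `ℓ² → ℓ²` operator norm. -/
def spec {m k : Type*} [Fintype m] [Fintype k] [DecidableEq k] (A : Matrix m k ℝ) : ℝ :=
  ‖LinearMap.toContinuousLinearMap (Matrix.toEuclideanLin A)‖

/-- Smallest singular value of a real matrix. -/
def sigmaMin {m k : Type*} [Fintype m] [Fintype k] [DecidableEq k] (A : Matrix m k ℝ) : ℝ :=
  ⨅ x : {x : EuclideanSpace ℝ k // ‖x‖ = 1}, ‖Matrix.toEuclideanLin A x.1‖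

/-- Nuclear norm (sum of singular values) of a square real matrix. -/
def nuclearNorm {d : ℕ} (A : Matrix (Fin d) (Fin d) ℝ) : ℝ :=
  ∑ i, Real.sqrt ((show (Aᵀ * A).IsHermitian by
    simpa using Matrix.isHermitian_conjTranspose_mul_self A).eigenvalues i)

/-- `Q` is a `d × d` real orthogonal matrix. -/
def IsOrtho {d : ℕ} (Q : Matrix (Fin d) (Fin d) ℝ) : Prop :=
  Qᵀ * Q = 1 ∧ Q * Qᵀ = 1

open scoped Classical in
/-- The matrix sign function `sgn(A) = A (AᵀA)^{-1/2} = U Vᵀ` for `A = U Σ Vᵀ`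
(junk value if `AᵀA` is not positive semidefinite, which never happens over `ℝ`). -/
def msgn {d : ℕ} (A : Matrix (Fin d) (Fin d) ℝ) : Matrix (Fin d) (Fin d) ℝ :=
  if h : (Aᵀ * A).PosSemidef then A * (h.1.eigenvectorUnitary.1 *
    diagonal ((RCLike.ofReal : ℝ → ℝ) ∘ Real.sqrt ∘ h.1.eigenvalues) *
    (star h.1.eigenvectorUnitary : Matrix (Fin d) (Fin d) ℝ))⁻¹ else 1

/-- The `i`-th `d × d` block of an `nd × d` block matrix. -/
def blk {d n : ℕ} (X : Matrix (Fin n × Fin d) (Fin d) ℝ) (i : Fin n) :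
    Matrix (Fin d) (Fin d) ℝ :=
  Matrix.of fun a b => X (i, a) b

/-- `X ∈ O(d)^{⊗n}`: every `d × d` block of `X` is orthogonal. -/
def BlockOrtho {d n : ℕ} (X : Matrix (Fin n × Fin d) (Fin d) ℝ) : Prop :=
  ∀ i, IsOrtho (blk X i)

/-- Blockwise matrix sign function on `nd × d` block matrices. -/
def bsgn {d n : ℕ} (X : Matrix (Fin n × Fin d) (Fin d) ℝ) :
    Matrix (Fin n × Fin d) (Fin d) ℝ :=
  Matrix.of fun p b => msgn (blk X p.1) p.2 b

/-- `d_F(X, Y) = min_{Q ∈ O(d)} ‖X - Y Q‖_F`. -/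
def dF {d n : ℕ} (X Y : Matrix (Fin n × Fin d) (Fin d) ℝ) : ℝ :=
  ⨅ Q : {Q : Matrix (Fin d) (Fin d) ℝ // IsOrtho Q}, frob (X - Y * Q.1)

/-- The `(i, j)` block of an `nd × nd` block matrix. -/
def blk2 {d n : ℕ} (A : Matrix (Fin n × Fin d) (Fin n × Fin d) ℝ) (i j : Fin n) :
    Matrix (Fin d) (Fin d) ℝ :=
  Matrix.of fun a b => A (i, a) (j, b)

/-- The `l`-th `nd × d` block column of an `nd × nd` block matrix. -/
def bcol {d n : ℕ} (W : Matrix (Fin n × Fin d) (Fin n × Fin d) ℝ) (l : Fin n) :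
    Matrix (Fin n × Fin d) (Fin d) ℝ :=
  Matrix.of fun p b => W p (l, b)

/-- Projection onto the tangent space of `O(d)` at `X`: `P_{T_X}(G) = (G - X Gᵀ X)/2`. -/
def tanProj {d : ℕ} (X G : Matrix (Fin d) (Fin d) ℝ) : Matrix (Fin d) (Fin d) ℝ :=
  (1 / 2 : ℝ) • (G - X * Gᵀ * X)

/-- The `i`-th block of the Euclidean gradient: `G_i = ∑_{j ≠ i} (X_i - A_{ij} X_j)`. -/
def Gblk {d n : ℕ} (A : Matrix (Fin n × Fin d) (Fin n × Fin d) ℝ)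
    (X : Matrix (Fin n × Fin d) (Fin d) ℝ) (i : Fin n) : Matrix (Fin d) (Fin d) ℝ :=
  ∑ j ∈ Finset.univ.erase i, (blk X i - blk2 A i j * blk X j)

/-- One Riemannian gradient step before retraction:
`F_i = X_i - μ P_{T_{X_i}}(G_i)`, assembled as an `nd × d` block matrix. -/
def Fstep {d n : ℕ} (A : Matrix (Fin n × Fin d) (Fin n × Fin d) ℝ) (μ : ℝ)
    (X : Matrix (Fin n × Fin d) (Fin d) ℝ) : Matrix (Fin n × Fin d) (Fin d) ℝ :=
  Matrix.of fun p b => (blk X p.1 - μ • tanProj (blk X p.1) (Gblk A X p.1)) p.2 b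

/-- `Y` is an orthonormal matrix of eigenvectors for the top `d` eigenvalues of the
symmetric matrix `A`: its columns are orthonormal, its range is `A`-invariant, and the
Rayleigh quotient on its range dominates the Rayleigh quotient on its orthogonal
complement. -/
def IsTopEigvecs {d n : ℕ} (A : Matrix (Fin n × Fin d) (Fin n × Fin d) ℝ)
    (Y : Matrix (Fin n × Fin d) (Fin d) ℝ) : Prop :=
  Yᵀ * Y = 1 ∧ (∃ Λ : Matrix (Fin d) (Fin d) ℝ, A * Y = Y * Λ) ∧
  ∀ v w : (Fin n × Fin d) → ℝ, (∃ c : Fin d → ℝ, v = Y.mulVec c) → Yᵀ.mulVec w = 0 →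
    (w ⬝ᵥ w) * (v ⬝ᵥ A.mulVec v) ≥ (v ⬝ᵥ v) * (w ⬝ᵥ A.mulVec w)

/-- `W` is the symmetric block Gaussian noise matrix: `W` is symmetric, its diagonal
blocks vanish, each entry in an off-diagonal block `W_{ij}` (`i < j`) is standard
Gaussian, and all these entries (over all blocks with `i < j`) are mutually
independent. -/
def IsGaussianNoise {d n : ℕ} {Ω : Type*} [MeasurableSpace Ω] (P : Measure Ω)
    (W : Ω → Matrix (Fin n × Fin d) (Fin n × Fin d) ℝ) : Prop :=
  (∀ p q, Measurable fun ω => W ω p q) ∧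
  (∀ ω, (W ω)ᵀ = W ω) ∧
  (∀ ω (i : Fin n) (a b : Fin d), W ω (i, a) (i, b) = 0) ∧
  (∀ (i j : Fin n) (a b : Fin d), i < j →
    P.map (fun ω => W ω (i, a) (j, b)) = gaussianReal 0 1) ∧
  iIndepFun
    (fun (e : {x : (Fin n × Fin d) × (Fin n × Fin d) // x.1.1 < x.2.1}) ω =>
      W ω e.1.1 e.1.2) P

/-- Leave-one-out noise: set the `l`-th block row and block column of `W` to zero. -/
def looNoise {d n : ℕ} (W : Matrix (Fin n × Fin d) (Fin n × Fin d) ℝ) (l : Fin n) :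
    Matrix (Fin n × Fin d) (Fin n × Fin d) ℝ :=
  Matrix.of fun p q => if p.1 = l ∨ q.1 = l then 0 else W p q

/-- The Newton–Schulz iteration `S_0 = A`, `S_{t+1} = ½ S_t (3 I - S_tᵀ S_t)`. -/
def nsIter {d : ℕ} (A : Matrix (Fin d) (Fin d) ℝ) : ℕ → Matrix (Fin d) (Fin d) ℝ
  | 0 => A
  | (t + 1) => (1 / 2 : ℝ) • (nsIter A t * ((3 : ℝ) • (1 : Matrix (Fin d) (Fin d) ℝ) - (nsIter A t)ᵀ * nsIter A t))

/-! Write `B = YᵀX = Q P` and `B̃ = ỸᵀX̃ = Q̃ P̃` as polar decompositions. For `D = Q̃ - Q` the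
identities `2 tr(Dᵀ Q̃ P̃) = tr(Dᵀ D P̃)` and `2 tr(Dᵀ Q P) = -tr(Dᵀ D P)` show that `P ≥ b` and
`P̃ ≥ c` force `(b + c) ‖D‖² ≤ 2 tr(Dᵀ (B̃ - B)) ≤ 2 ‖D‖ ‖B̃ - B‖`.

All four of `X, Y, X̃, Ỹ` lie within `2√n/5` of rotations `Z Q` of `Z`, and `(Z Q)ᵀ (Z Q) = n`.
Pairing `B x` with the rotated vector `Q_Yᵀ Q_X x` and polarizing gives `σ_min(B) ≥ n/25` and
`σ_min(B̃) ≥ 17n/25`, which bound `P` and `P̃` from below. Since `X̃` and `Ỹ` have orthogonal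
blocks, their operator norm is `√n`, so `‖B̃ - B‖ ≤ 3√n e_F`, and `(18n/25) ‖D‖ ≤ 6√n e_F`. -/

section Frobenius

variable {m k l : Type*} [Fintype m] [Fintype k] [Fintype l]

attribute [local instance] Matrix.frobeniusNormedAddCommGroup

theorem frob_eq_norm (A : Matrix m k ℝ) : frob A = ‖A‖ := by
  simp [frob, frobenius_norm_def, Real.sqrt_eq_rpow]

theorem frob_nonneg (A : Matrix m k ℝ) : 0 ≤ frob A := Real.sqrt_nonneg _

theorem frob_add_le (A B : Matrix m k ℝ) : frob (A + B) ≤ frob A + frob B := by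
  simpa only [frob_eq_norm] using norm_add_le A B

theorem frob_sub_le (A B : Matrix m k ℝ) : frob (A - B) ≤ frob A + frob B := by
  simpa only [frob_eq_norm] using norm_sub_le A B

theorem frob_sub_comm (A B : Matrix m k ℝ) : frob (A - B) = frob (B - A) := by
  simpa only [frob_eq_norm] using norm_sub_rev A B

theorem frob_transpose (A : Matrix m k ℝ) : frob Aᵀ = frob A := by
  simp only [frob_eq_norm, frobenius_norm_transpose]

theorem frob_mul_le (A : Matrix m k ℝ) (B : Matrix k l ℝ) : frob (A * B) ≤ frob A * frob B := by
  simpa only [frob_eq_norm] using frobenius_norm_mul A B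

theorem norm_toEuclideanLin_le [DecidableEq k] (A : Matrix m k ℝ) (x : EuclideanSpace ℝ k) :
    ‖toEuclideanLin A x‖ ≤ frob A * ‖x‖ := by
  have h := frobenius_norm_mul A (replicateCol Unit x.ofLp)
  rwa [← replicateCol_mulVec, frobenius_norm_replicateCol, frobenius_norm_replicateCol,
    ← frob_eq_norm] at h

end Frobenius

section Trace

variable {m k l : Type*} [Fintype m] [Fintype k] [Fintype l]

theorem trace_transpose_mul_eq_sum (A B : Matrix m k ℝ) :
    trace (Aᵀ * B) = ∑ i, ∑ j, A i j * B i j := by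
  simp only [trace, diag, mul_apply, transpose_apply]
  exact Finset.sum_comm

theorem frob_sq (A : Matrix m k ℝ) : frob A ^ 2 = trace (Aᵀ * A) := by
  rw [frob, Real.sq_sqrt (by positivity), trace_transpose_mul_eq_sum]
  simp only [sq]

theorem trace_transpose_mul_le (A B : Matrix m k ℝ) : trace (Aᵀ * B) ≤ frob A * frob B := by
  have h := Real.sum_mul_le_sqrt_mul_sqrt Finset.univ (fun p : m × k => A p.1 p.2)
    (fun p => B p.1 p.2)
  rw [trace_transpose_mul_eq_sum, frob, frob]
  simpa only [← Finset.univ_product_univ, Finset.sum_product] using h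

variable [DecidableEq k]

theorem frob_mul_sq_of_transpose_mul_self {U : Matrix m k ℝ} {c : ℝ} (hU : Uᵀ * U = c • 1)
    (M : Matrix k l ℝ) : frob (U * M) ^ 2 = c * frob M ^ 2 := by
  rw [frob_sq, frob_sq, transpose_mul, Matrix.mul_assoc, ← Matrix.mul_assoc Uᵀ, hU,
    Matrix.smul_mul, Matrix.one_mul, Matrix.mul_smul, trace_smul, smul_eq_mul]

theorem frob_transpose_mul_le_of_transpose_mul_self {U : Matrix m k ℝ} {c : ℝ}
    (hU : Uᵀ * U = c • 1) (hc : 0 ≤ c) (E : Matrix m l ℝ) : frob (Uᵀ * E) ≤ √c * frob E := by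
  have hUU : frob (U * (Uᵀ * E)) = √c * frob (Uᵀ * E) := by
    rw [← Real.sqrt_sq (frob_nonneg _), frob_mul_sq_of_transpose_mul_self hU,
      Real.sqrt_mul hc, Real.sqrt_sq (frob_nonneg _)]
  have hsq : frob (Uᵀ * E) ^ 2 ≤ frob E * (√c * frob (Uᵀ * E)) := by
    rw [frob_sq, ← hUU, transpose_mul, transpose_transpose, Matrix.mul_assoc]
    exact trace_transpose_mul_le E (U * (Uᵀ * E))
  nlinarith [frob_nonneg (Uᵀ * E), mul_nonneg (Real.sqrt_nonneg c) (frob_nonneg E)]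

theorem frob_transpose_mul_sub_transpose_mul_le {X Y X' Y' : Matrix m k ℝ} {c e : ℝ}
    (hX' : X'ᵀ * X' = c • 1) (hY' : Y'ᵀ * Y' = c • 1) (hc : 0 ≤ c)
    (hX : frob (X - X') ≤ e) (hY : frob (Y - Y') ≤ e) (he : e ≤ √c) :
    frob (Y'ᵀ * X' - Yᵀ * X) ≤ 3 * √c * e := by
  have hsplit : Y'ᵀ * X' - Yᵀ * X
      = Y'ᵀ * (X' - X) + (X'ᵀ * (Y' - Y))ᵀ - (Y' - Y)ᵀ * (X' - X) := by
    simp only [transpose_mul, transpose_transpose, transpose_sub, Matrix.mul_sub,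
      Matrix.sub_mul]
    abel
  rw [frob_sub_comm] at hX hY
  have h1 := frob_transpose_mul_le_of_transpose_mul_self hY' hc (X' - X)
  have h2 := frob_transpose_mul_le_of_transpose_mul_self hX' hc (Y' - Y)
  have h3 := frob_mul_le (Y' - Y)ᵀ (X' - X)
  rw [frob_transpose] at h3
  have he0 : 0 ≤ e := (frob_nonneg _).trans hX
  calc frob (Y'ᵀ * X' - Yᵀ * X)
      ≤ frob (Y'ᵀ * (X' - X)) + frob (X'ᵀ * (Y' - Y)) + frob ((Y' - Y)ᵀ * (X' - X)) := by
        rw [hsplit, ← frob_transpose (X'ᵀ * (Y' - Y))]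
        refine (frob_sub_le _ _).trans ?_
        gcongr
        exact frob_add_le _ _
    _ ≤ √c * e + √c * e + e * e := by
        gcongr
        · exact h1.trans (mul_le_mul_of_nonneg_left hX (Real.sqrt_nonneg c))
        · exact h2.trans (mul_le_mul_of_nonneg_left hY (Real.sqrt_nonneg c))
        · exact h3.trans (mul_le_mul hY hX (frob_nonneg _) he0)
    _ ≤ 3 * √c * e := by nlinarith

end Trace

section PosSemidef

variable {k : Type*} [Fintype k] [DecidableEq k]

open scoped MatrixOrder in
theorem trace_mul_nonneg {S P : Matrix k k ℝ} (hS : S.PosSemidef) (hP : P.PosSemidef) :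
    0 ≤ trace (S * P) := by
  obtain ⟨R, rfl⟩ := CStarAlgebra.nonneg_iff_eq_star_mul_self.mp hS.nonneg
  rw [Matrix.mul_assoc, trace_mul_comm, star_eq_conjTranspose]
  exact (hP.mul_mul_conjTranspose_same R).trace_nonneg

theorem mul_trace_le_trace_mul {S P : Matrix k k ℝ} {c : ℝ} (hS : S.PosSemidef)
    (hP : (P - c • 1).PosSemidef) : c * trace S ≤ trace (S * P) := by
  have h := trace_mul_nonneg hS hP
  rwa [Matrix.mul_sub, trace_sub, Matrix.mul_smul, Matrix.mul_one, trace_smul, smul_eq_mul,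
    sub_nonneg] at h

theorem posSemidef_sub_smul_one_of_mul_norm_le {P : Matrix k k ℝ} {c : ℝ} (hP : P.PosSemidef)
    (h : ∀ x : EuclideanSpace ℝ k, c * ‖x‖ ≤ ‖toEuclideanLin P x‖) :
    (P - c • 1).PosSemidef := by
  have hT : (P - c • 1).IsHermitian := hP.1.sub (isHermitian_one.smul (IsSelfAdjoint.all c))
  refine hT.posSemidef_iff_eigenvalues_nonneg.mpr fun i => ?_
  set w := hT.eigenvectorBasis i
  have hw : ‖w‖ = 1 := hT.eigenvectorBasis.orthonormal.1 i
  have hPw : P *ᵥ w.ofLp = (hT.eigenvalues i + c) • w.ofLp := by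
    have hTw := hT.mulVec_eigenvectorBasis i
    rw [sub_mulVec, smul_mulVec, one_mulVec, sub_eq_iff_eq_add] at hTw
    rw [hTw, add_smul]
  have hpos : 0 ≤ hT.eigenvalues i + c := by
    have hww : w.ofLp ⬝ᵥ w.ofLp = 1 := by
      rw [← star_trivial w.ofLp, ← EuclideanSpace.inner_eq_star_dotProduct, star_trivial,
        WithLp.toLp_ofLp, real_inner_self_eq_norm_sq, hw, one_pow]
    simpa [hPw, hww] using hP.dotProduct_mulVec_nonneg w.ofLp
  have := h w
  rw [toLpLin_apply, hPw, WithLp.toLp_smul, WithLp.toLp_ofLp, norm_smul, hw,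
    Real.norm_of_nonneg hpos] at this
  show 0 ≤ hT.eigenvalues i
  linarith

end PosSemidef

section Euclidean

variable {m k l : Type*} [Fintype m] [Fintype k] [Fintype l] [DecidableEq k] [DecidableEq l]

theorem inner_toEuclideanLin (A : Matrix m k ℝ) (B : Matrix m l ℝ) (x : EuclideanSpace ℝ k)
    (y : EuclideanSpace ℝ l) :
    inner ℝ (toEuclideanLin A x) (toEuclideanLin B y) = inner ℝ x (toEuclideanLin (Aᵀ * B) y) := by
  simp only [EuclideanSpace.inner_eq_star_dotProduct, ofLp_toLpLin, toLin'_apply, star_trivial,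
    ← mulVec_mulVec]
  rw [dotProduct_mulVec, ← mulVec_transpose]

theorem norm_toEuclideanLin_of_transpose_mul_self {A : Matrix m k ℝ} {c : ℝ}
    (hA : Aᵀ * A = c • 1) (hc : 0 ≤ c) (x : EuclideanSpace ℝ k) :
    ‖toEuclideanLin A x‖ = √c * ‖x‖ := by
  rw [← Real.sqrt_sq (norm_nonneg _), ← real_inner_self_eq_norm_sq, inner_toEuclideanLin, hA,
    map_smul, toLpLin_one, LinearMap.smul_apply, LinearMap.id_apply, inner_smul_right,
    real_inner_self_eq_norm_sq, Real.sqrt_mul hc, Real.sqrt_sq (norm_nonneg _)]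

theorem sub_mul_norm_le_norm_toEuclideanLin {U W : Matrix m k ℝ} {a c : ℝ}
    (hW : Wᵀ * W = c • 1) (hc : 0 ≤ c) (hUW : frob (U - W) ≤ a) (y : EuclideanSpace ℝ k) :
    (√c - a) * ‖y‖ ≤ ‖toEuclideanLin U y‖ := by
  have h := norm_le_norm_add_norm_sub' (toEuclideanLin W y) (toEuclideanLin U y)
  rw [norm_toEuclideanLin_of_transpose_mul_self hW hc, norm_sub_rev, ← LinearMap.sub_apply,
    ← map_sub] at h
  have := (norm_toEuclideanLin_le (U - W) y).trans
    (mul_le_mul_of_nonneg_right hUW (norm_nonneg y))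
  linarith

theorem isUnit_det_of_mul_norm_le {M : Matrix k k ℝ} {c : ℝ} (hc : 0 < c)
    (h : ∀ x : EuclideanSpace ℝ k, c * ‖x‖ ≤ ‖toEuclideanLin M x‖) : IsUnit M.det := by
  rw [isUnit_iff_ne_zero, Ne, ← exists_mulVec_eq_zero_iff]
  rintro ⟨v, hv, hMv⟩
  have hx := h (WithLp.toLp 2 v)
  rw [toLpLin_toLp, toLin'_apply, hMv, WithLp.toLp_zero, norm_zero] at hx
  have h0 : ‖WithLp.toLp 2 v‖ ≤ 0 := le_of_mul_le_mul_left (by simpa using hx) hc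
  exact hv (by simpa using h0)

end Euclidean

open scoped MatrixOrder in
theorem exists_posSemidef_msgn_mul_eq {d : ℕ} {A : Matrix (Fin d) (Fin d) ℝ}
    (hA : IsUnit A.det) :
    ∃ P : Matrix (Fin d) (Fin d) ℝ, P.PosSemidef ∧ (msgn A)ᵀ * msgn A = 1 ∧ msgn A * P = A := by
  have hAA : (Aᵀ * A).PosSemidef := by
    simpa using posSemidef_conjTranspose_mul_self A
  -- the matrix inverted in `msgn` is the functional-calculus square root of `AᵀA`
  set S := cfc Real.sqrt (Aᵀ * A) with hSdef
  have hmsgn : msgn A = A * S⁻¹ := by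
    rw [msgn, dif_pos hAA, hSdef, hAA.1.cfc_eq]
    rfl
  have hS : S.PosSemidef := (cfc_nonneg fun x _ => Real.sqrt_nonneg x).posSemidef
  have hSS : S * S = Aᵀ * A := by
    rw [← cfc_mul ..]
    conv_rhs => rw [← cfc_id' ℝ (Aᵀ * A)]
    exact cfc_congr fun x hx => Real.mul_self_sqrt (spectrum_nonneg_of_nonneg hAA.nonneg hx)
  have hSdet : IsUnit S.det := by
    have h := congrArg det hSS
    rw [det_mul, det_mul, det_transpose] at h
    exact (IsUnit.mul_iff.mp (h ▸ hA.mul hA)).1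
  have hSt : Sᵀ = S := by simpa using hS.1.eq
  refine ⟨S, hS, ?_, ?_⟩
  · rw [hmsgn, transpose_mul, transpose_nonsing_inv, hSt, Matrix.mul_assoc,
      ← Matrix.mul_assoc Aᵀ, ← hSS, ← Matrix.mul_assoc, ← Matrix.mul_assoc,
      nonsing_inv_mul S hSdet, Matrix.one_mul, mul_nonsing_inv S hSdet]
  · rw [hmsgn, Matrix.mul_assoc, nonsing_inv_mul S hSdet, Matrix.mul_one]

theorem isOrtho_msgn {d : ℕ} {A : Matrix (Fin d) (Fin d) ℝ} (hA : IsUnit A.det) :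
    IsOrtho (msgn A) := by
  obtain ⟨-, -, hQ, -⟩ := exists_posSemidef_msgn_mul_eq hA
  exact ⟨hQ, mul_eq_one_comm.mp hQ⟩

theorem exists_msgn_mul_eq_of_mul_norm_le {d : ℕ} {B : Matrix (Fin d) (Fin d) ℝ} {c : ℝ}
    (hc : 0 < c) (h : ∀ x, c * ‖x‖ ≤ ‖toEuclideanLin B x‖) :
    ∃ P, (P - c • 1).PosSemidef ∧ (msgn B)ᵀ * msgn B = 1 ∧ msgn B * P = B := by
  obtain ⟨P, hP, hQ, hQP⟩ := exists_posSemidef_msgn_mul_eq (isUnit_det_of_mul_norm_le hc h)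
  refine ⟨P, posSemidef_sub_smul_one_of_mul_norm_le hP fun x => ?_, hQ, hQP⟩
  have hPx := norm_toEuclideanLin_of_transpose_mul_self (hQ.trans (one_smul ℝ 1).symm)
    zero_le_one (toEuclideanLin P x)
  rw [Real.sqrt_one, one_mul, ← LinearMap.comp_apply, ← toLpLin_mul_same, hQP] at hPx
  exact hPx ▸ h x

section Polar

variable {k : Type*} [Fintype k] [DecidableEq k]

theorem two_mul_trace_sub_transpose_mul {Q R P : Matrix k k ℝ} (hQ : Qᵀ * Q = 1)
    (hR : Rᵀ * R = 1) (hP : Pᵀ = P) :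
    2 * trace ((R - Q)ᵀ * (R * P)) = trace ((R - Q)ᵀ * (R - Q) * P) := by
  have hswap : trace (Rᵀ * Q * P) = trace (Qᵀ * R * P) := by
    rw [← trace_transpose, transpose_mul, transpose_mul, transpose_transpose, hP,
      trace_mul_comm]
  simp only [transpose_sub, Matrix.sub_mul, Matrix.mul_sub, trace_sub, ← Matrix.mul_assoc, hQ,
    hR, hswap]
  ring

theorem add_mul_frob_sub_le_of_polar {Q R P S : Matrix k k ℝ} {b c : ℝ} (hQ : Qᵀ * Q = 1)
    (hR : Rᵀ * R = 1) (hP : (P - b • 1).PosSemidef) (hS : (S - c • 1).PosSemidef) :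
    (b + c) * frob (R - Q) ≤ 2 * frob (R * S - Q * P) := by
  have transpose_eq {T : Matrix k k ℝ} {t : ℝ} (hT : (T - t • 1).PosSemidef) : Tᵀ = T := by
    simpa using congrArg (· + t • (1 : Matrix k k ℝ)) hT.1.eq
  have hDD : ((R - Q)ᵀ * (R - Q)).PosSemidef := by
    simpa using posSemidef_conjTranspose_mul_self (R - Q)
  have hS' : c * frob (R - Q) ^ 2 ≤ 2 * trace ((R - Q)ᵀ * (R * S)) := by
    rw [two_mul_trace_sub_transpose_mul hQ hR (transpose_eq hS), frob_sq]
    exact mul_trace_le_trace_mul hDD hS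
  have hP' : b * frob (R - Q) ^ 2 ≤ -2 * trace ((R - Q)ᵀ * (Q * P)) := by
    have h := two_mul_trace_sub_transpose_mul hR hQ (transpose_eq hP)
    rw [← neg_sub R Q, transpose_neg, neg_mul_neg, Matrix.neg_mul, trace_neg] at h
    rw [neg_mul, ← mul_neg, h, frob_sq]
    exact mul_trace_le_trace_mul hDD hP
  have hCS := trace_transpose_mul_le (R - Q) (R * S - Q * P)
  rw [Matrix.mul_sub, trace_sub] at hCS
  have hsq : (b + c) * frob (R - Q) * frob (R - Q) ≤ 2 * frob (R * S - Q * P) * frob (R - Q) := by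
    linarith
  rcases (frob_nonneg (R - Q)).eq_or_lt with hD | hD
  · rw [← hD, mul_zero]
    exact mul_nonneg zero_le_two (frob_nonneg _)
  · exact le_of_mul_le_mul_right hsq hD

end Polar

section Blocks

variable {d n : ℕ}

theorem transpose_mul_eq_sum_blk (M N : Matrix (Fin n × Fin d) (Fin d) ℝ) :
    Mᵀ * N = ∑ i, (blk M i)ᵀ * blk N i := by
  ext a b
  simp only [mul_apply, Matrix.sum_apply, transpose_apply, blk, of_apply]
  rw [← Finset.univ_product_univ, Finset.sum_product]

theorem BlockOrtho.transpose_mul_self {M : Matrix (Fin n × Fin d) (Fin d) ℝ}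
    (hM : BlockOrtho M) : Mᵀ * M = (n : ℝ) • 1 := by
  simp only [transpose_mul_eq_sum_blk, (hM _).1, Finset.sum_const, Finset.card_univ,
    Fintype.card_fin]
  exact (Nat.cast_smul_eq_nsmul ℝ n 1).symm

theorem blk_bsgn (X : Matrix (Fin n × Fin d) (Fin d) ℝ) (i : Fin n) :
    blk (bsgn X) i = msgn (blk X i) := by
  ext
  rfl

theorem blockOrtho_bsgn {X : Matrix (Fin n × Fin d) (Fin d) ℝ}
    (hX : ∀ i, IsUnit (blk X i).det) : BlockOrtho (bsgn X) :=
  fun i => blk_bsgn X i ▸ isOrtho_msgn (hX i)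

theorem exists_frob_sub_mul_lt_of_dF_le {X Z : Matrix (Fin n × Fin d) (Fin d) ℝ} {ε s : ℝ}
    (hε : ε ≤ 1 / (4 * √2)) (hs : 0 < s) (h : dF X Z ≤ 2 * ε * s) :
    ∃ Q, IsOrtho Q ∧ frob (X - Z * Q) < 2 / 5 * s := by
  have hε' : ε < 1 / 5 := by
    have h2 : 5 < 4 * √(2 : ℝ) := by
      nlinarith [Real.sq_sqrt (zero_le_two : (0 : ℝ) ≤ 2), Real.sqrt_nonneg 2]
    rw [le_div_iff₀ (by positivity)] at hε
    nlinarith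
  have : Nonempty {Q : Matrix (Fin d) (Fin d) ℝ // IsOrtho Q} := ⟨⟨1, by simp [IsOrtho]⟩⟩
  obtain ⟨Q, hQ⟩ := exists_lt_of_ciInf_lt (h.trans_lt (by nlinarith : 2 * ε * s < 2 / 5 * s))
  exact ⟨Q.1, Q.2, hQ⟩

end Blocks

section Alignment

variable {m : Type*} [Fintype m] {d : ℕ}

theorem transpose_mul_self_mul_of_isOrtho {Z : Matrix m (Fin d) ℝ}
    {Q : Matrix (Fin d) (Fin d) ℝ} {c : ℝ} (hZ : Zᵀ * Z = c • 1) (hQ : IsOrtho Q) :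
    (Z * Q)ᵀ * (Z * Q) = c • 1 := by
  rw [transpose_mul, Matrix.mul_assoc, ← Matrix.mul_assoc Zᵀ, hZ, Matrix.smul_mul,
    Matrix.one_mul, Matrix.mul_smul, hQ.1]

theorem mul_norm_le_norm_toEuclideanLin_transpose_mul {Z U V : Matrix m (Fin d) ℝ}
    {Qu Qv : Matrix (Fin d) (Fin d) ℝ} {a α : ℝ}
    (hQu : IsOrtho Qu) (hQv : IsOrtho Qv) (hα : 0 ≤ α)
    (hU : frob (U - Z * Qu) ≤ a) (hV : frob (V - Z * Qv) ≤ a)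
    (hUα : ∀ y, α * ‖y‖ ≤ ‖toEuclideanLin U y‖) (hVα : ∀ x, α * ‖x‖ ≤ ‖toEuclideanLin V x‖)
    (x : EuclideanSpace ℝ (Fin d)) :
    (α ^ 2 - 2 * a ^ 2) * ‖x‖ ≤ ‖toEuclideanLin (Uᵀ * V) x‖ := by
  -- `U y` and `V x` are both close to `Z Qv x`
  set y := toEuclideanLin (Quᵀ * Qv) x
  have hy : ‖y‖ = ‖x‖ := by
    have hR : (Quᵀ * Qv)ᵀ * (Quᵀ * Qv) = (1 : ℝ) • 1 := by
      rw [transpose_mul, transpose_transpose, Matrix.mul_assoc, ← Matrix.mul_assoc Qu, hQu.2,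
        Matrix.one_mul, hQv.1, one_smul]
    simpa only [Real.sqrt_one, one_mul] using
      norm_toEuclideanLin_of_transpose_mul_self hR zero_le_one x
  have hZ : toEuclideanLin (Z * Qu) y = toEuclideanLin (Z * Qv) x := by
    rw [← LinearMap.comp_apply, ← toLpLin_mul_same, ← Matrix.mul_assoc, Matrix.mul_assoc Z,
      hQu.2, Matrix.mul_one]
  have hdist : ‖toEuclideanLin U y - toEuclideanLin V x‖ ≤ 2 * a * ‖x‖ :=
    calc ‖toEuclideanLin U y - toEuclideanLin V x‖
        = ‖toEuclideanLin (U - Z * Qu) y - toEuclideanLin (V - Z * Qv) x‖ := by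
          simp only [map_sub, LinearMap.sub_apply, hZ, sub_sub_sub_cancel_right]
      _ ≤ frob (U - Z * Qu) * ‖y‖ + frob (V - Z * Qv) * ‖x‖ :=
          (norm_sub_le _ _).trans
            (add_le_add (norm_toEuclideanLin_le _ _) (norm_toEuclideanLin_le _ _))
      _ ≤ 2 * a * ‖x‖ := by
          rw [hy]
          nlinarith [norm_nonneg x]
  have hpolar := norm_sub_sq_real (toEuclideanLin U y) (toEuclideanLin V x)
  rw [inner_toEuclideanLin] at hpolar
  have hCS := real_inner_le_norm y (toEuclideanLin (Uᵀ * V) x)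
  rw [hy] at hCS
  have hUy := pow_le_pow_left₀ (by positivity) (hy ▸ hUα y) 2
  have hVx := pow_le_pow_left₀ (by positivity) (hVα x) 2
  have hd := pow_le_pow_left₀ (norm_nonneg _) hdist 2
  have key : (α ^ 2 - 2 * a ^ 2) * ‖x‖ * ‖x‖ ≤ ‖toEuclideanLin (Uᵀ * V) x‖ * ‖x‖ := by
    nlinarith
  rcases (norm_nonneg x).eq_or_lt with hx | hx
  · rw [← hx, mul_zero]
    exact norm_nonneg _
  · exact le_of_mul_le_mul_right key hx

theorem div_mul_norm_le_norm_toEuclideanLin_transpose_mul {Z U V : Matrix m (Fin d) ℝ}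
    {Qu Qv : Matrix (Fin d) (Fin d) ℝ} {c : ℝ}
    (hZ : Zᵀ * Z = c • 1) (hc : 0 ≤ c) (hQu : IsOrtho Qu) (hQv : IsOrtho Qv)
    (hU : frob (U - Z * Qu) ≤ 2 / 5 * √c) (hV : frob (V - Z * Qv) ≤ 2 / 5 * √c)
    (x : EuclideanSpace ℝ (Fin d)) :
    c / 25 * ‖x‖ ≤ ‖toEuclideanLin (Uᵀ * V) x‖ := by
  have h := mul_norm_le_norm_toEuclideanLin_transpose_mul hQu hQv
    (by nlinarith [Real.sqrt_nonneg c]) hU hV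
    (sub_mul_norm_le_norm_toEuclideanLin (transpose_mul_self_mul_of_isOrtho hZ hQu) hc hU)
    (sub_mul_norm_le_norm_toEuclideanLin (transpose_mul_self_mul_of_isOrtho hZ hQv) hc hV) x
  convert h using 2
  linear_combination (-1 / 25 : ℝ) * Real.sq_sqrt hc

theorem mul_norm_le_norm_toEuclideanLin_transpose_mul_of_transpose_mul_self
    {Z U V : Matrix m (Fin d) ℝ} {Qu Qv : Matrix (Fin d) (Fin d) ℝ} {c : ℝ}
    (hc : 0 ≤ c) (hUU : Uᵀ * U = c • 1) (hVV : Vᵀ * V = c • 1) (hQu : IsOrtho Qu)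
    (hQv : IsOrtho Qv) (hU : frob (U - Z * Qu) ≤ 2 / 5 * √c)
    (hV : frob (V - Z * Qv) ≤ 2 / 5 * √c) (x : EuclideanSpace ℝ (Fin d)) :
    17 * c / 25 * ‖x‖ ≤ ‖toEuclideanLin (Uᵀ * V) x‖ := by
  have h := mul_norm_le_norm_toEuclideanLin_transpose_mul hQu hQv (Real.sqrt_nonneg c) hU hV
    (fun y => (norm_toEuclideanLin_of_transpose_mul_self hUU hc y).ge)
    (fun x => (norm_toEuclideanLin_of_transpose_mul_self hVV hc x).ge) x
  convert h using 2
  linear_combination (-17 / 25 : ℝ) * Real.sq_sqrt hc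

end Alignment

/-- Under the hypotheses of the approximate alignment lemma, the
optimal rotations `Q = sgn(YᵀX)` and `Q̃ = sgn(ỸᵀX̃)` satisfy
`n ‖Q̃ - Q‖_F ≤ 9 √n · e_F`. -/
theorem optimal_rotation_stability {d n : ℕ} (Z X Y : Matrix (Fin n × Fin d) (Fin d) ℝ)
    (hZ : BlockOrtho Z)
    (hXinv : ∀ i, IsUnit (blk X i).det) (hYinv : ∀ i, IsUnit (blk Y i).det)
    (ε eF : ℝ) (hε : ε ≤ 1 / (4 * Real.sqrt 2)) (heF : eF ≤ Real.sqrt n)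
    (hXN : dF X Z ≤ 2 * ε * Real.sqrt n) (hYN : dF Y Z ≤ 2 * ε * Real.sqrt n)
    (hXtN : dF (bsgn X) Z ≤ 2 * ε * Real.sqrt n) (hYtN : dF (bsgn Y) Z ≤ 2 * ε * Real.sqrt n)
    (hXe : frob (X - bsgn X) ≤ eF) (hYe : frob (Y - bsgn Y) ≤ eF) :
    (n : ℝ) * frob (msgn ((bsgn Y)ᵀ * bsgn X) - msgn (Yᵀ * X))
      ≤ 9 * Real.sqrt n * eF := by
  rcases n.eq_zero_or_pos with rfl | hn
  · simp
  have hn' : (0 : ℝ) < n := Nat.cast_pos.mpr hn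
  have hs : 0 < √(n : ℝ) := Real.sqrt_pos.mpr hn'
  obtain ⟨Qx, hQx, hX⟩ := exists_frob_sub_mul_lt_of_dF_le hε hs hXN
  obtain ⟨Qy, hQy, hY⟩ := exists_frob_sub_mul_lt_of_dF_le hε hs hYN
  obtain ⟨Qx', hQx', hX'⟩ := exists_frob_sub_mul_lt_of_dF_le hε hs hXtN
  obtain ⟨Qy', hQy', hY'⟩ := exists_frob_sub_mul_lt_of_dF_le hε hs hYtN
  have hZZ := hZ.transpose_mul_self
  have hXX := (blockOrtho_bsgn hXinv).transpose_mul_self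
  have hYY := (blockOrtho_bsgn hYinv).transpose_mul_self
  obtain ⟨P, hP, hQ, hQP⟩ := exists_msgn_mul_eq_of_mul_norm_le (by positivity)
    (div_mul_norm_le_norm_toEuclideanLin_transpose_mul hZZ hn'.le hQy hQx hY.le hX.le)
  obtain ⟨P', hP', hQ', hQP'⟩ := exists_msgn_mul_eq_of_mul_norm_le (by positivity)
    (mul_norm_le_norm_toEuclideanLin_transpose_mul_of_transpose_mul_self hn'.le hYY hXX
      hQy' hQx' hY'.le hX'.le)
  have hpolar := add_mul_frob_sub_le_of_polar hQ hQ' hP hP'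
  rw [hQP, hQP'] at hpolar
  have hpert := frob_transpose_mul_sub_transpose_mul_le hXX hYY hn'.le hXe hYe heF
  have heF0 : 0 ≤ eF := (frob_nonneg _).trans hXe
  linarith [mul_nonneg hs.le heF0]

end
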